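/- arXiv:1709.06303 — 5 statements merged into one kernel-verified Lean document; each statement's English description precedes it below -/
import Mathlib

section
/- Let Γ be a group and χ₁, χ₂ : Γ → ℝ be nonzero group homomorphisms. Then {γ | χ₁(γ) ≥ 0} = {γ | χ₂(γ) ≥ 0} if and only if there exists a real number r > 0 with χ₂ = r • χ₁. -/
/-!
If `{χ₁ ≥ 0} = {χ₂ ≥ 0}` and `χ₁ g₀ > 0`, put `r = χ₂ g₀ / χ₁ g₀`. Were `χ₂ g > r χ₁ g` for some
`g`, then for `n` large and `m` chosen with `χ₁ (n • g + m • g₀) ∈ [-χ₁ g₀, 0)`, the Archimedean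
property gives `χ₂ (n • g + m • g₀) > 0`, contradicting the equality of the cones. Applied to `-g`
as well, this forces `χ₂ = r • χ₁`.
-/

namespace AddMonoidHom

variable {G : Type*} [AddGroup G]

theorem eq_zero_of_forall_nonneg (f : G →+ ℝ) (hf : ∀ g, 0 ≤ f g) : f = 0 :=
  ext fun g ↦ le_antisymm (by simpa using hf (-g)) (hf g)

theorem exists_pos_of_ne_zero {f : G →+ ℝ} (hf : f ≠ 0) : ∃ g, 0 < f g := by
  obtain ⟨g, hg⟩ := DFunLike.ne_iff.1 hf
  rcases (show f g ≠ 0 from hg).lt_or_gt with hneg | hpos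
  · exact ⟨-g, by simpa using hneg⟩
  · exact ⟨g, hpos⟩

theorem pos_of_neg_imp_neg {χ₁ χ₂ : G →+ ℝ} (h : ∀ g, χ₁ g < 0 → χ₂ g < 0) {g : G}
    (hg : 0 < χ₁ g) : 0 < χ₂ g := by
  simpa using h (-g) (by simpa using hg)

theorem le_smul_of_neg_imp_neg {χ₁ χ₂ : G →+ ℝ} (h : ∀ g, χ₁ g < 0 → χ₂ g < 0) {g₀ : G}
    (hg₀ : 0 < χ₁ g₀) (g : G) : χ₂ g ≤ (χ₂ g₀ / χ₁ g₀) * χ₁ g := by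
  set r := χ₂ g₀ / χ₁ g₀
  have hr : 0 ≤ r := div_nonneg (pos_of_neg_imp_neg h hg₀).le hg₀.le
  have hrg₀ : χ₂ g₀ = r * χ₁ g₀ := (div_mul_cancel₀ _ hg₀.ne').symm
  by_contra! hlt
  obtain ⟨n, hn⟩ := exists_lt_nsmul (sub_pos.2 hlt) (χ₂ g₀)
  obtain ⟨m, ⟨hm_ge, hm_lt⟩, -⟩ := existsUnique_add_zsmul_mem_Ico hg₀ (χ₁ (n • g)) (-χ₁ g₀)
  have hneg : χ₂ (n • g + m • g₀) < 0 := h _ (by simpa [map_zsmul] using hm_lt)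
  simp only [map_add, map_nsmul, map_zsmul, nsmul_eq_mul, zsmul_eq_mul] at hneg hm_ge hn
  rw [hrg₀] at hneg hn
  nlinarith [mul_le_mul_of_nonneg_left hm_ge hr]

theorem eq_smul_of_neg_imp_neg {χ₁ χ₂ : G →+ ℝ} (h : ∀ g, χ₁ g < 0 → χ₂ g < 0) {g₀ : G}
    (hg₀ : 0 < χ₁ g₀) : χ₂ = (χ₂ g₀ / χ₁ g₀) • χ₁ := by
  ext g
  have hle := le_smul_of_neg_imp_neg h hg₀ g
  have hge := le_smul_of_neg_imp_neg h hg₀ (-g)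
  simp only [map_neg] at hge
  simp only [smul_apply, smul_eq_mul]
  linarith

theorem setOf_nonneg_eq_iff (χ₁ χ₂ : G →+ ℝ) :
    {g | 0 ≤ χ₁ g} = {g | 0 ≤ χ₂ g} ↔ ∃ r : ℝ, 0 < r ∧ χ₂ = r • χ₁ := by
  constructor
  · intro hset
    have hneg : ∀ g, χ₁ g < 0 → χ₂ g < 0 := fun g hg ↦
      not_le.1 fun hg' ↦ ((Set.ext_iff.1 hset g).2 hg').not_gt hg
    by_cases hχ₁ : χ₁ = 0
    · subst hχ₁
      refine ⟨1, one_pos, ?_⟩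
      rw [one_smul]
      exact eq_zero_of_forall_nonneg χ₂ fun g ↦ (Set.ext_iff.1 hset g).1 (by simp)
    · obtain ⟨g₀, hg₀⟩ := exists_pos_of_ne_zero hχ₁
      exact ⟨_, div_pos (pos_of_neg_imp_neg hneg hg₀) hg₀, eq_smul_of_neg_imp_neg hneg hg₀⟩
  · rintro ⟨r, hr, rfl⟩
    ext g
    simp [mul_nonneg_iff_of_pos_left hr]

end AddMonoidHom

theorem stmt1_general {Γ : Type*} [Group Γ] (χ₁ χ₂ : Γ → ℝ)
    (hχ₁ : ∀ a b : Γ, χ₁ (a * b) = χ₁ a + χ₁ b)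
    (hχ₂ : ∀ a b : Γ, χ₂ (a * b) = χ₂ a + χ₂ b) :
    {γ : Γ | 0 ≤ χ₁ γ} = {γ : Γ | 0 ≤ χ₂ γ} ↔ ∃ r : ℝ, 0 < r ∧ χ₂ = r • χ₁ := by
  let f₁ : Additive Γ →+ ℝ := AddMonoidHom.mk' (χ₁ ∘ Additive.toMul) hχ₁
  let f₂ : Additive Γ →+ ℝ := AddMonoidHom.mk' (χ₂ ∘ Additive.toMul) hχ₂
  have hcoe (r : ℝ) : f₂ = r • f₁ ↔ χ₂ = r • χ₁ := DFunLike.coe_fn_eq.symm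
  exact (f₁.setOf_nonneg_eq_iff f₂).trans (exists_congr fun r ↦ and_congr_right' (hcoe r))

/-- For nonzero characters `χ₁, χ₂ : Γ → ℝ`, the submonoids
`{γ | χ₁ γ ≥ 0}` and `{γ | χ₂ γ ≥ 0}` coincide iff `χ₂ = r • χ₁` for some `r > 0`. -/
theorem stmt1 {Γ : Type*} [Group Γ] (χ₁ χ₂ : Γ → ℝ)
    (hχ₁ : ∀ a b : Γ, χ₁ (a * b) = χ₁ a + χ₁ b)
    (hχ₂ : ∀ a b : Γ, χ₂ (a * b) = χ₂ a + χ₂ b)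
    (h₁ : χ₁ ≠ 0) (h₂ : χ₂ ≠ 0) :
    {γ : Γ | 0 ≤ χ₁ γ} = {γ : Γ | 0 ≤ χ₂ γ} ↔ ∃ r : ℝ, 0 < r ∧ χ₂ = r • χ₁ :=
  stmt1_general χ₁ χ₂ hχ₁ hχ₂
end

section
/- Let G be a group acting on a set X, let x, y ∈ X, and let χ : G → ℝ be a group homomorphism. Write G_χ = {g ∈ G | χ(g) ≥ 0} and let G_{(x,y)} be the stabilizer of (x,y) under the diagonal action of G on X × X. If χ vanishes on G_{(x,y)} and χ is nonzero on G, then there is no finite set of elements (x₁,y₁),…,(xₙ,yₙ) in the orbit G·(x,y) such that G·(x,y) = ⋃ⱼ G_χ · (xⱼ,yⱼ). -/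
/-!
Pulling `χ` back along `g ↦ g • (x, y)` gives a well-defined height function on the orbit,
since `χ` vanishes on the stabilizer. Acting by `G_χ` never lowers the height, so a finite union of
`G_χ`-orbits has height bounded below by the least height of its base points, whereas a nonzero
homomorphism to `ℝ` takes arbitrarily negative values.
-/

namespace AddMonoidHom

theorem exists_apply_lt {A R : Type*} [AddGroup A] [AddCommGroup R] [LinearOrder R]
    [IsOrderedAddMonoid R] [Archimedean R] (φ : A →+ R) (hφ : φ ≠ 0) (b : R) :
    ∃ a, φ a < b := by
  obtain ⟨a, ha⟩ := DFunLike.ne_iff.1 hφ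
  obtain ⟨c, hc⟩ : ∃ c, φ c < 0 := by
    rcases (show φ a ≠ 0 from ha).lt_or_gt with h | h
    · exact ⟨a, h⟩
    · exact ⟨-a, by simpa using h⟩
  obtain ⟨n, hn⟩ := exists_lt_nsmul (neg_pos.2 hc) (-b)
  rw [smul_neg, neg_lt_neg_iff] at hn
  exact ⟨n • c, by rwa [map_nsmul]⟩

theorem apply_ofMul_eq_of_smul_eq {G α R : Type*} [Group G] [MulAction G α] [AddCommGroup R]
    (φ : Additive G →+ R) {a : α} (hvan : ∀ g : G, g • a = a → φ (.ofMul g) = 0)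
    {g g' : G} (h : g • a = g' • a) : φ (.ofMul g) = φ (.ofMul g') := by
  have hstab : (g'⁻¹ * g) • a = a := by rw [mul_smul, h, inv_smul_smul]
  have := hvan _ hstab
  rwa [ofMul_mul, ofMul_inv, map_add, map_neg, neg_add_eq_zero, eq_comm] at this

end AddMonoidHom

/-- If `χ` vanishes on the stabilizer `G_{(x,y)}` of `(x,y)` in the
diagonal action of `G` on `X × X`, and `χ` is nonzero, then the orbit `G·(x,y)` is
not a finite union of `G_χ`-orbits. -/
theorem stmt2 {G X : Type*} [Group G] [MulAction G X] (x y : X) (χ : G → ℝ)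
    (hχ : ∀ a b : G, χ (a * b) = χ a + χ b)
    (hvan : ∀ g : G, g • (x, y) = (x, y) → χ g = 0)
    (hne : ∃ g : G, χ g ≠ 0) :
    ¬ ∃ (n : ℕ) (p : Fin n → X × X),
        (∀ j, p j ∈ MulAction.orbit G (x, y)) ∧
          ∀ q ∈ MulAction.orbit G (x, y), ∃ (j : Fin n) (g : G), 0 ≤ χ g ∧ q = g • p j := by
  rintro ⟨n, p, hp, hcov⟩
  let φ : Additive G →+ ℝ := AddMonoidHom.mk' (fun g => χ g.toMul) hχ
  choose h hh using hp
  obtain ⟨b, hb⟩ := Finite.exists_ge fun j => χ (h j)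
  obtain ⟨g₀, hg₀⟩ := φ.exists_apply_lt (DFunLike.ne_iff.2 hne) b
  obtain ⟨j, g, hg, hq⟩ := hcov (g₀.toMul • (x, y)) (MulAction.mem_orbit _ _)
  rw [← hh j, smul_smul] at hq
  have hheight : φ g₀ = χ g + χ (h j) :=
    (φ.apply_ofMul_eq_of_smul_eq hvan hq).trans (hχ _ _)
  linarith [hb j]
end

section
/- Let G be a group acting transitively on a set X, let x₁ ∈ X, and let χ : G → ℝ be a nonzero group homomorphism. If the submonoid G_χ = {g ∈ G | χ(g) ≥ 0} acts transitively on X (i.e. G_χ · x₁ = X), then the restriction of χ to the stabilizer G_{x₁} is nonzero. -/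
section AdditiveCharacter

variable {G A : Type*} [Group G] {χ : G → A}

lemma map_one_of_map_mul [AddGroup A] (hχ : ∀ a b : G, χ (a * b) = χ a + χ b) : χ 1 = 0 := by
  simpa using hχ 1 1

lemma map_inv_of_map_mul [AddGroup A] (hχ : ∀ a b : G, χ (a * b) = χ a + χ b) (g : G) :
    χ g⁻¹ = -χ g := by
  rw [eq_neg_iff_add_eq_zero, ← hχ, inv_mul_cancel, map_one_of_map_mul hχ]

lemma exists_map_neg_of_map_mul [AddCommGroup A] [LinearOrder A] [IsOrderedAddMonoid A]
    (hχ : ∀ a b : G, χ (a * b) = χ a + χ b) (hne : ∃ g : G, χ g ≠ 0) : ∃ g : G, χ g < 0 := by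
  obtain ⟨g, hg⟩ := hne
  rcases hg.lt_or_gt with hneg | hpos
  · exact ⟨g, hneg⟩
  · exact ⟨g⁻¹, by rwa [map_inv_of_map_mul hχ, neg_neg_iff_pos]⟩

end AdditiveCharacter

theorem stmt3_general {G X : Type*} [Group G] [MulAction G X] (x₁ : X) (χ : G → ℝ)
    (hχ : ∀ a b : G, χ (a * b) = χ a + χ b)
    (hne : ∃ g : G, χ g ≠ 0)
    (hmon : ∀ x : X, ∃ g : G, 0 ≤ χ g ∧ g • x₁ = x) :
    ∃ g : G, g • x₁ = x₁ ∧ χ g ≠ 0 := by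
  -- Reach `g • x₁` with some `h ∈ G_χ`; then `g⁻¹ * h` fixes `x₁` and `χ (g⁻¹ * h) = χ h - χ g > 0`.
  obtain ⟨g, hg⟩ := exists_map_neg_of_map_mul hχ hne
  obtain ⟨h, hh, hhx⟩ := hmon (g • x₁)
  refine ⟨g⁻¹ * h, by rw [mul_smul, hhx, inv_smul_smul], ?_⟩
  rw [hχ, map_inv_of_map_mul hχ]
  linarith

/-- If `G` acts transitively on `X`, `χ : G → ℝ` is a nonzero character,
and the submonoid `G_χ = {g | χ g ≥ 0}` already acts transitively (`G_χ · x₁ = X`),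
then `χ` is nonzero on the stabilizer `G_{x₁}`. -/
theorem stmt3 {G X : Type*} [Group G] [MulAction G X] (x₁ : X) (χ : G → ℝ)
    (hχ : ∀ a b : G, χ (a * b) = χ a + χ b)
    (htrans : ∀ x : X, ∃ g : G, g • x₁ = x)
    (hne : ∃ g : G, χ g ≠ 0)
    (hmon : ∀ x : X, ∃ g : G, 0 ≤ χ g ∧ g • x₁ = x) :
    ∃ g : G, g • x₁ = x₁ ∧ χ g ≠ 0 :=
  stmt3_general x₁ χ hχ hne hmon
end

section
/- Let Γ = H ≀_X G with X = G·x₁ a single orbit, M = ⨁_{x∈X} H_x, and let χ : Γ → ℝ vanish on M. If M is generated by the set of conjugates {g h g⁻¹ | g ∈ G_χ, h ∈ H_{x₁}} where G_χ = {g ∈ G | χ(g) ≥ 0}, then G_χ acts transitively on X, i.e. X = G_χ · x₁. -/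
/-!
Every generator `g • singleElt x₁ h` with `g ∈ G_χ` is supported at the point `g • x₁` of
`G_χ • x₁`. Functions supported in a fixed set form a subgroup, so every element of the group
they generate, which is all of `M`, is supported in `G_χ • x₁`. Since `H ≠ 1`, each point `x`
is the support of some `singleElt x h`, hence lies in `G_χ • x₁`.
-/

/-- The restricted direct product `⨁_{x ∈ X} H_x`: functions `X → H` with finite
(multiplicative) support, as a subgroup of the full direct product. -/
def restrictedProd (H : Type*) [Group H] (X : Type*) : Subgroup (X → H) where
  carrier := {f | (Function.mulSupport f).Finite}
  one_mem' := by simp [Function.mulSupport_one]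
  mul_mem' := by
    intro f g hf hg
    exact Set.Finite.subset (hf.union hg) (Function.mulSupport_mul f g)
  inv_mem' := by
    intro f hf
    simpa [Function.mulSupport_inv] using hf

/-- The permutation action of `G` on `⨁_{x ∈ X} H_x` induced by a `G`-action on `X`. -/
def wreathAction (H : Type*) [Group H] (X : Type*) (G : Type*) [Group G] [MulAction G X] :
    G →* MulAut (restrictedProd H X) where
  toFun g :=
    { toFun := fun f => ⟨fun x => f.1 (g⁻¹ • x), by
        have : (Function.mulSupport fun x => f.1 (g⁻¹ • x)) ⊆ (fun x => g • x) '' Function.mulSupport f.1 := by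
          intro x hx
          exact ⟨g⁻¹ • x, hx, by simp⟩
        exact Set.Finite.subset (f.2.image _) this⟩
      invFun := fun f => ⟨fun x => f.1 (g • x), by
        have : (Function.mulSupport fun x => f.1 (g • x)) ⊆ (fun x => g⁻¹ • x) '' Function.mulSupport f.1 := by
          intro x hx
          exact ⟨g • x, hx, by simp⟩
        exact Set.Finite.subset (f.2.image _) this⟩
      left_inv := by intro f; ext x; simp
      right_inv := by intro f; ext x; simp
      map_mul' := by intro f₁ f₂; rfl }
  map_one' := by ext f x; simp
  map_mul' := by intro g₁ g₂; ext f x; simp [mul_smul]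

/-- The restricted permutational wreath product `H ≀_X G = (⨁_{x ∈ X} H_x) ⋊ G`. -/
abbrev WreathProduct (H : Type*) [Group H] (X : Type*) (G : Type*) [Group G] [MulAction G X] :=
  restrictedProd H X ⋊[wreathAction H X G] G

/-- The element of `⨁_{x ∈ X} H_x` supported at `x₁` with value `h` (the copy of
`h ∈ H` inside the coordinate subgroup `H_{x₁}`). -/
def singleElt {H : Type*} [Group H] {X : Type*} [DecidableEq X] (x₁ : X) (h : H) :
    restrictedProd H X :=
  ⟨Pi.mulSingle x₁ h,
    Set.Finite.subset (Set.finite_singleton x₁) Pi.mulSupport_mulSingle_subset⟩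

section

open Function

variable {H : Type*} [Group H] {X : Type*}

variable (H) in
def supportedIn (S : Set X) : Subgroup (restrictedProd H X) where
  carrier := {f | mulSupport f.1 ⊆ S}
  one_mem' := by simp
  mul_mem' ha hb := (mulSupport_mul _ _).trans (Set.union_subset ha hb)
  inv_mem' ha := by simpa [mulSupport_inv] using ha

theorem mulSupport_subset_of_closure_eq_top {A : Set (restrictedProd H X)} {S : Set X}
    (hA : Subgroup.closure A = ⊤) (hAS : ∀ a ∈ A, mulSupport a.1 ⊆ S)
    (f : restrictedProd H X) : mulSupport f.1 ⊆ S := by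
  have hle : Subgroup.closure A ≤ supportedIn H S := (Subgroup.closure_le _).2 hAS
  exact hle (hA ▸ Subgroup.mem_top f)

variable [DecidableEq X]

theorem mulSupport_singleElt_subset (x : X) (h : H) :
    mulSupport (singleElt x h).1 ⊆ {x} :=
  Pi.mulSupport_mulSingle_subset

theorem mem_mulSupport_singleElt {x : X} {h : H} (hh : h ≠ 1) :
    x ∈ mulSupport (singleElt x h).1 := by
  simpa [singleElt] using hh

theorem wreathAction_singleElt (G : Type*) [Group G] [MulAction G X] (g : G) (x : X) (h : H) :
    wreathAction H X G g (singleElt x h) = singleElt (g • x) h := by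
  ext y
  show (Pi.mulSingle x h : X → H) (g⁻¹ • y) = (Pi.mulSingle (g • x) h : X → H) y
  simp only [Pi.mulSingle_apply, inv_smul_eq_iff]

end

theorem stmt11_general (H : Type*) [Group H] (X : Type*) [DecidableEq X]
    (G : Type*) [Group G] [MulAction G X] (x₁ : X)
    (hH : ∃ h : H, h ≠ 1)
    (χ : WreathProduct H X G → ℝ)
    (hgen : Subgroup.closure {m : restrictedProd H X |
        ∃ (g : G) (h : H), 0 ≤ χ (SemidirectProduct.inr g) ∧
          m = wreathAction H X G g (singleElt x₁ h)} = ⊤) :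
    ∀ x : X, ∃ g : G, 0 ≤ χ (SemidirectProduct.inr g) ∧ g • x₁ = x := by
  intro x
  obtain ⟨h₀, hh₀⟩ := hH
  refine mulSupport_subset_of_closure_eq_top
    (S := {y | ∃ g : G, 0 ≤ χ (SemidirectProduct.inr g) ∧ g • x₁ = y})
    hgen ?_ _ (mem_mulSupport_singleElt hh₀)
  rintro _ ⟨g, h, hg, rfl⟩ y hy
  rw [wreathAction_singleElt] at hy
  exact ⟨g, hg, (mulSupport_singleElt_subset _ _ hy).symm⟩

/-- Let `Γ = H ≀_X G` with `X = G·x₁` a single orbit, `H ≠ 1`, and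
`χ : Γ → ℝ` a character vanishing on `M = ⨁_{x∈X} H_x`. If `M` is generated by the
conjugates `g H_{x₁} g⁻¹` with `g ∈ G_χ`, then `G_χ` acts transitively: `X = G_χ·x₁`. -/
theorem stmt11 (H : Type*) [Group H] (X : Type*) [DecidableEq X]
    (G : Type*) [Group G] [MulAction G X] (x₁ : X)
    (htrans : ∀ x : X, ∃ g : G, g • x₁ = x)
    (hH : ∃ h : H, h ≠ 1)
    (χ : WreathProduct H X G → ℝ)
    (hχ : ∀ a b : WreathProduct H X G, χ (a * b) = χ a + χ b)
    (hM : ∀ m : restrictedProd H X, χ (SemidirectProduct.inl m) = 0)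
    (hgen : Subgroup.closure {m : restrictedProd H X |
        ∃ (g : G) (h : H), 0 ≤ χ (SemidirectProduct.inr g) ∧
          m = wreathAction H X G g (singleElt x₁ h)} = ⊤) :
    ∀ x : X, ∃ g : G, 0 ≤ χ (SemidirectProduct.inr g) ∧ g • x₁ = x :=
  stmt11_general H X G x₁ hH χ hgen
end

section
/- Let F be a free group on 𝒳, χ : F → ℝ a group homomorphism, and N ⊴ F a normal subgroup with N ⊆ ker χ. Then R(χ) = {w ∈ N | v_χ(w) ≥ 0} (prefix minima of the reduced word representing w are nonnegative) is a subgroup of N: it contains 1, and is closed under inverses and products. In particular, if w ∈ N and v_χ(w) ≥ 0 then v_χ(w⁻¹) ≥ 0. -/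
/-!
Every prefix of a freely reduced form of a word `L` equals, in the free group, some prefix of
`L`, so free reduction preserves the property that every prefix has nonnegative `χ`-value.
Hence for `w₁, w₂ ∈ R(χ)` it suffices to check the prefixes of the unreduced concatenation
`w₁.toWord ++ w₂.toWord`: those inside `w₁` are fine, and the others have value
`χ w₁ + (prefix of w₂) = 0 + (…) ≥ 0`. For inverses, a prefix of `w⁻¹` has
value `χ w⁻¹ - (suffix of w⁻¹) = χ(prefix of w)` because `χ w = 0`.
-/

open FreeGroup

section PrefixNonneg

variable {α : Type*} (χ : FreeGroup α → ℝ)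

/-- The paper's condition `v_χ(L) ≥ 0`. -/
def PrefixNonneg (L : List (α × Bool)) : Prop :=
  ∀ l₁ l₂ : List (α × Bool), L = l₁ ++ l₂ → 0 ≤ χ (mk l₁)

variable {χ}

theorem prefixNonneg_nil (hχ : ∀ a b, χ (a * b) = χ a + χ b) : PrefixNonneg χ [] := by
  intro l₁ l₂ hl
  obtain ⟨rfl, -⟩ := List.append_eq_nil_iff.mp hl.symm
  have h := hχ 1 1
  rw [one_mul] at h
  rw [← one_eq_mk]
  linarith

theorem PrefixNonneg.of_red_step {L L' : List (α × Bool)} (h : Red.Step L L')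
    (hL : PrefixNonneg χ L) : PrefixNonneg χ L' := by
  obtain @⟨a, c, x, b⟩ := h
  intro l₁ l₂ hl
  rcases List.append_eq_append_iff.mp hl.symm with ⟨a', rfl, -⟩ | ⟨c', rfl, rfl⟩
  · exact hL l₁ (a' ++ (x, b) :: (x, !b) :: c) (by simp)
  · have hcancel : mk (a ++ (x, b) :: (x, !b) :: c') = mk (a ++ c') :=
      Quot.sound Red.Step.not
    rw [← hcancel]
    exact hL _ l₂ (by simp)

theorem PrefixNonneg.of_red {L L' : List (α × Bool)} (h : Red L L')
    (hL : PrefixNonneg χ L) : PrefixNonneg χ L' := by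
  induction h with
  | refl => exact hL
  | tail _ hstep ih => exact ih.of_red_step hstep

variable (hχ : ∀ a b, χ (a * b) = χ a + χ b)
include hχ

theorem PrefixNonneg.append {L₁ L₂ : List (α × Bool)} (h₁ : PrefixNonneg χ L₁)
    (h₂ : PrefixNonneg χ L₂) (hL₁ : χ (mk L₁) = 0) : PrefixNonneg χ (L₁ ++ L₂) := by
  intro l₁ l₂ hl
  rcases List.append_eq_append_iff.mp hl with ⟨a', rfl, ha'⟩ | ⟨c', hc', -⟩
  · rw [← mul_mk, hχ, hL₁, zero_add]
    exact h₂ a' l₂ ha'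
  · exact h₁ l₁ c' hc'

theorem PrefixNonneg.invRev {L : List (α × Bool)} (h : PrefixNonneg χ L)
    (hL : χ (mk L) = 0) : PrefixNonneg χ (FreeGroup.invRev L) := by
  intro l₁ l₂ hl
  have hL' : L = FreeGroup.invRev l₂ ++ FreeGroup.invRev l₁ := by
    rw [← invRev_invRev (L₁ := L), hl, invRev_append]
  have hsuffix := h _ _ hL'
  have hsplit : χ (mk (FreeGroup.invRev l₂)) + χ (mk (FreeGroup.invRev l₁)) = 0 := by
    rw [← hχ, mul_mk, ← hL', hL]
  have hinv : ∀ l : List (α × Bool), χ (mk (FreeGroup.invRev l)) + χ (mk l) = 0 := by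
    intro l
    have h1 := hχ 1 1
    rw [one_mul] at h1
    rw [← hχ, ← inv_mk, inv_mul_cancel]
    linarith
  linarith [hinv l₁, hinv l₂]

end PrefixNonneg

theorem stmt14_general {𝒳 : Type*} [DecidableEq 𝒳] (χ : FreeGroup 𝒳 → ℝ)
    (hχ : ∀ a b : FreeGroup 𝒳, χ (a * b) = χ a + χ b)
    (N : Subgroup (FreeGroup 𝒳)) (hker : ∀ w ∈ N, χ w = 0) :
    (1 : FreeGroup 𝒳) ∈ {w : FreeGroup 𝒳 | w ∈ N ∧
        ∀ l₁ l₂ : List (𝒳 × Bool), w.toWord = l₁ ++ l₂ → 0 ≤ χ (FreeGroup.mk l₁)} ∧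
      (∀ w ∈ {w : FreeGroup 𝒳 | w ∈ N ∧
          ∀ l₁ l₂ : List (𝒳 × Bool), w.toWord = l₁ ++ l₂ → 0 ≤ χ (FreeGroup.mk l₁)},
        w⁻¹ ∈ {w : FreeGroup 𝒳 | w ∈ N ∧
          ∀ l₁ l₂ : List (𝒳 × Bool), w.toWord = l₁ ++ l₂ → 0 ≤ χ (FreeGroup.mk l₁)}) ∧
      ∀ w₁ ∈ {w : FreeGroup 𝒳 | w ∈ N ∧
          ∀ l₁ l₂ : List (𝒳 × Bool), w.toWord = l₁ ++ l₂ → 0 ≤ χ (FreeGroup.mk l₁)},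
        ∀ w₂ ∈ {w : FreeGroup 𝒳 | w ∈ N ∧
          ∀ l₁ l₂ : List (𝒳 × Bool), w.toWord = l₁ ++ l₂ → 0 ≤ χ (FreeGroup.mk l₁)},
        w₁ * w₂ ∈ {w : FreeGroup 𝒳 | w ∈ N ∧
          ∀ l₁ l₂ : List (𝒳 × Bool), w.toWord = l₁ ++ l₂ → 0 ≤ χ (FreeGroup.mk l₁)} := by
  refine ⟨⟨one_mem N, ?_⟩, ?_, ?_⟩
  · rw [toWord_one]
    exact prefixNonneg_nil hχ
  · rintro w ⟨hw, hwχ⟩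
    refine ⟨inv_mem hw, ?_⟩
    rw [toWord_inv]
    exact PrefixNonneg.invRev hχ hwχ (by rw [mk_toWord]; exact hker w hw)
  · rintro w₁ ⟨hw₁, hw₁χ⟩ w₂ ⟨hw₂, hw₂χ⟩
    refine ⟨mul_mem hw₁ hw₂, ?_⟩
    rw [toWord_mul]
    have hconcat : PrefixNonneg χ (w₁.toWord ++ w₂.toWord) :=
      PrefixNonneg.append hχ hw₁χ hw₂χ (by rw [mk_toWord]; exact hker w₁ hw₁)
    exact hconcat.of_red reduce.red

/-- For a character `χ` on the free group `F(𝒳)` and a normal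
subgroup `N ⊆ ker χ`, the set `R(χ)` of elements of `N` whose reduced word has all
prefix `χ`-values nonnegative is a subgroup of `N`: it contains `1` and is closed
under inverses and products. -/
theorem stmt14 {𝒳 : Type*} [DecidableEq 𝒳] (χ : FreeGroup 𝒳 → ℝ)
    (hχ : ∀ a b : FreeGroup 𝒳, χ (a * b) = χ a + χ b)
    (N : Subgroup (FreeGroup 𝒳)) [N.Normal] (hker : ∀ w ∈ N, χ w = 0) :
    (1 : FreeGroup 𝒳) ∈ {w : FreeGroup 𝒳 | w ∈ N ∧
        ∀ l₁ l₂ : List (𝒳 × Bool), w.toWord = l₁ ++ l₂ → 0 ≤ χ (FreeGroup.mk l₁)} ∧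
      (∀ w ∈ {w : FreeGroup 𝒳 | w ∈ N ∧
          ∀ l₁ l₂ : List (𝒳 × Bool), w.toWord = l₁ ++ l₂ → 0 ≤ χ (FreeGroup.mk l₁)},
        w⁻¹ ∈ {w : FreeGroup 𝒳 | w ∈ N ∧
          ∀ l₁ l₂ : List (𝒳 × Bool), w.toWord = l₁ ++ l₂ → 0 ≤ χ (FreeGroup.mk l₁)}) ∧
      ∀ w₁ ∈ {w : FreeGroup 𝒳 | w ∈ N ∧
          ∀ l₁ l₂ : List (𝒳 × Bool), w.toWord = l₁ ++ l₂ → 0 ≤ χ (FreeGroup.mk l₁)},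
        ∀ w₂ ∈ {w : FreeGroup 𝒳 | w ∈ N ∧
          ∀ l₁ l₂ : List (𝒳 × Bool), w.toWord = l₁ ++ l₂ → 0 ≤ χ (FreeGroup.mk l₁)},
        w₁ * w₂ ∈ {w : FreeGroup 𝒳 | w ∈ N ∧
          ∀ l₁ l₂ : List (𝒳 × Bool), w.toWord = l₁ ++ l₂ → 0 ≤ χ (FreeGroup.mk l₁)} :=
  stmt14_general χ hχ N hker
end
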